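/- arXiv:2209.09190 — 2 statements merged into one kernel-verified Lean document; each statement's English description precedes it below -/
import Mathlib

section
/- Fix n ≥ 1, c > 0, δ ∈ (0, (2c)^{-1}), and i ∈ {1,…,n}. Let gᵢ : ℝ → (0,∞) be measurable with ∫_ℝ gᵢ(t)^{-1} e^{−δt²} dt < ∞, and for j ≠ i let gⱼ : ℝ → [0,∞) be bounded measurable. Let (A_p)_{p≥1} be symmetric positive definite n×n real matrices with A_p → c I_n entrywise. For a symmetric positive definite n×n matrix A, let φ_A(η) = (2π)^{-n/2}(det A)^{-1/2} exp(−½ ηᵀA^{-1}η); integrals are with respect to Lebesgue measure. Then limsup_{p→∞} ∫_{ℝⁿ} gᵢ(ηᵢ)^{-1} ∏_{j≠i} gⱼ(ηⱼ) φ_{A_p}(η) dη < ∞. -/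
open MeasureTheory Matrix Filter Topology Finset
open scoped ENNReal

/-!
Since `Aₚ → c I`, eventually `det Aₚ ≥ cⁿ / 2` and `ηᵀ Aₚ⁻¹ η ≥ 2δ ‖η‖²` (because `2δ < c⁻¹`), so
`φ_{Aₚ}(η) ≤ K ∏ⱼ exp(-δ ηⱼ²)` uniformly in large `p`. Bounding the factors `gⱼ`, `j ≠ i`, by
constants, the integrand is dominated for all large `p` by a constant times
`gᵢ(ηᵢ)⁻¹ exp(-δ ηᵢ²) ∏_{j ≠ i} exp(-δ ηⱼ²)`, a product of integrable one-dimensional functions.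
-/

/-- The centered Gaussian density on `ℝᵐ` with covariance matrix `A`. -/
noncomputable def gaussDensity {m : ℕ} (A : Matrix (Fin m) (Fin m) ℝ)
    (η : Fin m → ℝ) : ℝ :=
  (Real.sqrt ((2 * Real.pi) ^ m * A.det))⁻¹ * Real.exp (-(η ⬝ᵥ A⁻¹.mulVec η) / 2)

section QuadraticForm

variable {ι : Type*} [Fintype ι]

theorem Matrix.abs_dotProduct_mulVec_le {E : Matrix ι ι ℝ} {ε : ℝ} (hE : ∀ a b, |E a b| ≤ ε)
    (η : ι → ℝ) : |η ⬝ᵥ E *ᵥ η| ≤ ε * Fintype.card ι * ∑ j, η j ^ 2 := by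
  -- `2 |η a| |η b| ≤ η a ^ 2 + η b ^ 2` needs no sign condition on `ε`, unlike Cauchy–Schwarz.
  have hterm : ∀ a b, |η a * (E a b * η b)| ≤ ε * ((η a ^ 2 + η b ^ 2) / 2) := fun a b => by
    rw [abs_mul, abs_mul, mul_left_comm]
    calc |E a b| * (|η a| * |η b|) ≤ |E a b| * ((η a ^ 2 + η b ^ 2) / 2) := by
          gcongr; nlinarith [sq_abs (η a), sq_abs (η b), sq_nonneg (|η a| - |η b|)]
      _ ≤ ε * ((η a ^ 2 + η b ^ 2) / 2) := by gcongr; exact hE a b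
  calc |η ⬝ᵥ E *ᵥ η| = |∑ a, ∑ b, η a * (E a b * η b)| := by
        simp only [dotProduct, mulVec, mul_sum]
    _ ≤ ∑ a, ∑ b, ε * ((η a ^ 2 + η b ^ 2) / 2) :=
        (abs_sum_le_sum_abs _ _).trans <| sum_le_sum fun a _ =>
          (abs_sum_le_sum_abs _ _).trans <| sum_le_sum fun b _ => hterm a b
    _ = ε * Fintype.card ι * ∑ j, η j ^ 2 := by
        simp only [← mul_sum, add_div, sum_add_distrib, sum_const, card_univ, nsmul_eq_mul,
          ← sum_div]
        ring

theorem Matrix.le_dotProduct_mulVec_of_abs_sub_le {M : Matrix ι ι ℝ} [DecidableEq ι] {γ ε : ℝ}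
    (hM : ∀ a b, |(M - γ • 1) a b| ≤ ε) (η : ι → ℝ) :
    (γ - ε * Fintype.card ι) * ∑ j, η j ^ 2 ≤ η ⬝ᵥ M *ᵥ η := by
  have hsplit : η ⬝ᵥ M *ᵥ η = γ * ∑ j, η j ^ 2 + η ⬝ᵥ (M - γ • 1) *ᵥ η := by
    have hself : η ⬝ᵥ η = ∑ j, η j ^ 2 := by simp only [dotProduct, sq]
    rw [sub_mulVec, dotProduct_sub, smul_mulVec, one_mulVec, dotProduct_smul, smul_eq_mul,
      hself]
    ring
  have := abs_le.1 (abs_dotProduct_mulVec_le hM η)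
  linarith

theorem Matrix.eventually_le_dotProduct_mulVec [DecidableEq ι] {α : Type*} {l : Filter α}
    {M : α → Matrix ι ι ℝ} {β γ : ℝ} (hβ : β < γ) (hM : Tendsto M l (𝓝 (γ • 1))) :
    ∀ᶠ p in l, ∀ η : ι → ℝ, β * ∑ j, η j ^ 2 ≤ η ⬝ᵥ M p *ᵥ η := by
  set ε := (γ - β) / (Fintype.card ι + 1)
  have hε : 0 < ε := by positivity
  have hεcard : ε * Fintype.card ι ≤ γ - β := by
    rw [div_mul_eq_mul_div, div_le_iff₀ (by positivity)]
    nlinarith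
  have hentries : ∀ᶠ p in l, ∀ a b, |(M p - γ • 1) a b| ≤ ε := by
    simp only [eventually_all, sub_apply]
    exact fun a b => ((tendsto_pi_nhds.1 (tendsto_pi_nhds.1 hM a) b).eventually
      (eventually_abs_sub_lt _ hε)).mono fun _ h => h.le
  filter_upwards [hentries] with p hp η
  calc β * ∑ j, η j ^ 2 ≤ (γ - ε * Fintype.card ι) * ∑ j, η j ^ 2 := by
        gcongr; linarith
    _ ≤ η ⬝ᵥ M p *ᵥ η := le_dotProduct_mulVec_of_abs_sub_le hp η

end QuadraticForm

theorem Filter.Tendsto.matrix_inv_smul_one {ι α : Type*} [Fintype ι] [DecidableEq ι]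
    {l : Filter α} {A : α → Matrix ι ι ℝ} {c : ℝ} (hc : c ≠ 0) (hA : Tendsto A l (𝓝 (c • 1))) :
    Tendsto (fun p => (A p)⁻¹) l (𝓝 (c⁻¹ • 1)) := by
  have hinv : (c • 1 : Matrix ι ι ℝ)⁻¹ = c⁻¹ • 1 := by
    refine inv_eq_right_inv ?_
    rw [smul_mul_smul, one_mul, mul_inv_cancel₀ hc, one_smul]
  rw [← hinv]
  refine (continuousAt_matrix_inv _ ?_).tendsto.comp hA
  rw [Ring.inverse_eq_inv']
  exact continuousAt_inv₀ (by simp [hc])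

theorem gaussDensity_nonneg {m : ℕ} (A : Matrix (Fin m) (Fin m) ℝ) (η : Fin m → ℝ) :
    0 ≤ gaussDensity A η := by
  unfold gaussDensity; positivity

theorem gaussDensity_le_mul_prod_exp {m : ℕ} {A : Matrix (Fin m) (Fin m) ℝ} {d δ : ℝ}
    (hd : 0 < d) (hdA : d ≤ A.det) {η : Fin m → ℝ}
    (hq : 2 * δ * ∑ j, η j ^ 2 ≤ η ⬝ᵥ A⁻¹ *ᵥ η) :
    gaussDensity A η ≤
      (Real.sqrt ((2 * Real.pi) ^ m * d))⁻¹ * ∏ j, Real.exp (-δ * η j ^ 2) := by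
  rw [gaussDensity, ← Real.exp_sum, ← mul_sum]
  gcongr
  linarith

theorem exists_eventually_gaussDensity_le {m : ℕ} {α : Type*} {l : Filter α}
    {A : α → Matrix (Fin m) (Fin m) ℝ} {c δ : ℝ} (hc : 0 < c) (hδ : δ < (2 * c)⁻¹)
    (hA : Tendsto A l (𝓝 (c • 1))) :
    ∃ K, ∀ᶠ p in l, ∀ η, gaussDensity (A p) η ≤ K * ∏ j, Real.exp (-δ * η j ^ 2) := by
  have hdet : Tendsto (fun p => (A p).det) l (𝓝 (c ^ m)) := by
    simpa [Function.comp_def, det_smul] using ((continuous_id.matrix_det).tendsto _).comp hA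
  have h2δ : 2 * δ < c⁻¹ := by
    rw [mul_inv] at hδ; linarith
  have hquad := eventually_le_dotProduct_mulVec h2δ (hA.matrix_inv_smul_one hc.ne')
  have hcm : 0 < c ^ m / 2 := by positivity
  refine ⟨(Real.sqrt ((2 * Real.pi) ^ m * (c ^ m / 2)))⁻¹, ?_⟩
  filter_upwards [hdet.eventually (eventually_gt_nhds (half_lt_self (pow_pos hc m))), hquad]
    with p hp hq η
  exact gaussDensity_le_mul_prod_exp hcm hp.le (hq η)

theorem integrable_mul_prod_exp_neg_mul_sq {ι : Type*} [Fintype ι] {δ : ℝ} (hδ : 0 < δ) (i : ι)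
    {f : ℝ → ℝ} (hf : Integrable fun t => f t * Real.exp (-δ * t ^ 2)) :
    Integrable fun x : ι → ℝ => f (x i) * ∏ j, Real.exp (-δ * x j ^ 2) := by
  classical
  have hfactor : ∀ j, Integrable fun t => (if j = i then f t else 1) * Real.exp (-δ * t ^ 2) :=
    fun j => by
      split_ifs
      · exact hf
      · simpa using integrable_exp_neg_mul_sq hδ
  refine (Integrable.fintype_prod hfactor).congr (ae_of_all _ fun x => ?_)
  simp only [prod_mul_distrib, Fintype.prod_ite_eq']

theorem Finset.exists_prod_le_of_forall_le {ι α : Type*} (s : Finset ι) {g : ι → α → ℝ}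
    (hg0 : ∀ j ∈ s, ∀ t, 0 ≤ g j t) (hgb : ∀ j ∈ s, ∃ B, ∀ t, g j t ≤ B) :
    ∃ C, ∀ x : ι → α, ∏ j ∈ s, g j (x j) ≤ C := by
  classical
  choose B hB using hgb
  exact ⟨∏ j ∈ s, if h : j ∈ s then B j h else 0, fun x =>
    prod_le_prod (fun j hj => hg0 j hj _) fun j hj => by simpa [hj] using hB j hj (x j)⟩

theorem posterior_variance_integral_limsup_finite_general
    (n : ℕ) (c δ : ℝ) (hc : 0 < c) (hδ0 : 0 < δ) (hδ : δ < (2 * c)⁻¹)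
    (i : Fin n)
    (g : Fin n → ℝ → ℝ)
    (hgm : ∀ j, Measurable (g j)) (hg0 : ∀ j t, 0 ≤ g j t)
    (hgi : ∀ t, 0 < g i t)
    (hgb : ∀ j, j ≠ i → ∃ B, ∀ t, g j t ≤ B)
    (hgifin : (∫⁻ t : ℝ, ENNReal.ofReal ((g i t)⁻¹ * Real.exp (-δ * t ^ 2))) < ⊤)
    (A : ℕ → Matrix (Fin n) (Fin n) ℝ)
    (hAc : ∀ a b, Tendsto (fun p => A p a b) atTop
      (𝓝 ((c • (1 : Matrix (Fin n) (Fin n) ℝ)) a b))) :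
    Filter.limsup (fun p => ∫⁻ η : Fin n → ℝ,
        ENNReal.ofReal ((g i (η i))⁻¹ * (∏ j ∈ Finset.univ.erase i, g j (η j)) *
          gaussDensity (A p) η))
      atTop < ⊤ := by
  obtain ⟨C, hC⟩ := (univ.erase i).exists_prod_le_of_forall_le (fun j _ => hg0 j)
    fun j hj => hgb j (ne_of_mem_erase hj)
  have hC0 : 0 ≤ C := (prod_nonneg fun j _ => hg0 j 0).trans (hC 0)
  obtain ⟨K, hK⟩ := exists_eventually_gaussDensity_le hc hδ
    (tendsto_pi_nhds.2 fun a => tendsto_pi_nhds.2 (hAc a))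
  have hgi_int : Integrable fun t => (g i t)⁻¹ * Real.exp (-δ * t ^ 2) :=
    ⟨by fun_prop, (hasFiniteIntegral_iff_ofReal (ae_of_all _ fun t => by
      have := hgi t; positivity)).2 hgifin⟩
  have hdom := (integrable_mul_prod_exp_neg_mul_sq hδ0 i hgi_int).const_mul (C * K)
  refine (limsup_le_of_le (by isBoundedDefault) ?_).trans_lt hdom.lintegral_lt_top
  filter_upwards [hK] with p hp
  refine lintegral_mono fun η => ENNReal.ofReal_le_ofReal ?_
  have hgi_inv := inv_nonneg.2 (hgi (η i)).le
  calc (g i (η i))⁻¹ * (∏ j ∈ univ.erase i, g j (η j)) * gaussDensity (A p) η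
      ≤ (g i (η i))⁻¹ * C * (K * ∏ j, Real.exp (-δ * η j ^ 2)) := by
        gcongr
        exacts [gaussDensity_nonneg _ _, hC η, hp η]
    _ = C * K * ((g i (η i))⁻¹ * ∏ j, Real.exp (-δ * η j ^ 2)) := by ring

/-- **Finiteness half of Theorem 4(b).** If `∫ gᵢ⁻¹ e^{−δt²} dt < ∞` for some
`δ < (2c)⁻¹` and `Aₚ → cIₙ` entrywise, then
`limsup_p ∫ gᵢ(ηᵢ)⁻¹ ∏_{j≠i} gⱼ(ηⱼ) φ_{Aₚ}(η) dη < ∞`. -/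
theorem posterior_variance_integral_limsup_finite
    (n : ℕ) (hn : 1 ≤ n) (c δ : ℝ) (hc : 0 < c) (hδ0 : 0 < δ) (hδ : δ < (2 * c)⁻¹)
    (i : Fin n)
    (g : Fin n → ℝ → ℝ)
    (hgm : ∀ j, Measurable (g j)) (hg0 : ∀ j t, 0 ≤ g j t)
    (hgi : ∀ t, 0 < g i t)
    (hgb : ∀ j, j ≠ i → ∃ B, ∀ t, g j t ≤ B)
    (hgifin : (∫⁻ t : ℝ, ENNReal.ofReal ((g i t)⁻¹ * Real.exp (-δ * t ^ 2))) < ⊤)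
    (A : ℕ → Matrix (Fin n) (Fin n) ℝ) (hA : ∀ p, (A p).PosDef)
    (hAc : ∀ a b, Tendsto (fun p => A p a b) atTop
      (𝓝 ((c • (1 : Matrix (Fin n) (Fin n) ℝ)) a b))) :
    Filter.limsup (fun p => ∫⁻ η : Fin n → ℝ,
        ENNReal.ofReal ((g i (η i))⁻¹ * (∏ j ∈ Finset.univ.erase i, g j (η j)) *
          gaussDensity (A p) η))
      atTop < ⊤ :=
  posterior_variance_integral_limsup_finite_general n c δ hc hδ0 hδ i g hgm hg0 hgi hgb hgifin A hAc
end

section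
/- Fix n ≥ 1 and τ > 0. For j = 1,…,n let gⱼ : ℝ → [0,∞) be bounded measurable functions such that the limits aⱼ = lim_{t→−∞} gⱼ(t) and bⱼ = lim_{t→+∞} gⱼ(t) exist in [0,∞). Let (s_p)_{p≥1} be positive reals with s_p → ∞, and let (B_p)_{p≥1} be symmetric positive definite n×n real matrices with B_p → τ² I_n entrywise; set A_p = s_p B_p. For a symmetric positive definite n×n matrix A, let φ_A(η) = (2π)^{-n/2}(det A)^{-1/2} exp(−½ ηᵀA^{-1}η); integrals are with respect to Lebesgue measure. Then liminf_{p→∞} ∫_{ℝⁿ} ∏_{j=1}^n gⱼ(ηⱼ) φ_{A_p}(η) dη ≥ ∏_{j=1}^n (aⱼ + bⱼ)/2. -/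
/-!
Substituting `η = √sₚ • ζ` turns the `p`-th integral into
`∫ ∏ⱼ gⱼ(√sₚ ζⱼ) φ_{Bₚ}(ζ) dζ`. For every `ζ` with no zero coordinate, `gⱼ(√sₚ ζⱼ)` tends to `aⱼ`
or `bⱼ` according to the sign of `ζⱼ`, and `φ_{Bₚ}(ζ)` tends to `φ_{τ²I}(ζ) = ∏ⱼ N(ζⱼ; 0, τ²)`.
Fatou's lemma bounds the liminf below by the integral of this limit, which factorises over the
coordinates; each factor is `(aⱼ + bⱼ)/2` because each half-line carries Gaussian mass `1/2`.
-/

open MeasureTheory Matrix Filter Topology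
open scoped ENNReal

open ProbabilityTheory
open scoped NNReal

theorem MeasureTheory.Measure.lintegral_comp_smul {E : Type*} [NormedAddCommGroup E]
    [NormedSpace ℝ E] [MeasurableSpace E] [BorelSpace E] [FiniteDimensional ℝ E]
    (μ : Measure E) [μ.IsAddHaarMeasure] (f : E → ℝ≥0∞) {r : ℝ} (hr : r ≠ 0) :
    ∫⁻ x, f (r • x) ∂μ = ENNReal.ofReal |(r ^ Module.finrank ℝ E)⁻¹| * ∫⁻ x, f x ∂μ := by
  calc ∫⁻ x, f (r • x) ∂μ = ∫⁻ x, f x ∂(Measure.map (r • ·) μ) :=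
        (lintegral_map_equiv f (MeasurableEquiv.smul₀ r hr)).symm
    _ = _ := by rw [Measure.map_addHaar_smul μ hr, lintegral_smul_measure, smul_eq_mul]

theorem Real.sqrt_pow {x : ℝ} (hx : 0 ≤ x) (n : ℕ) : √(x ^ n) = √x ^ n := by
  rw [show x ^ n = (√x ^ n) ^ 2 by rw [← pow_mul, mul_comm, pow_mul, Real.sq_sqrt hx],
    Real.sqrt_sq (by positivity)]

section GaussDensity

variable {m : ℕ}

@[fun_prop]
theorem measurable_gaussDensity (A : Matrix (Fin m) (Fin m) ℝ) : Measurable (gaussDensity A) := by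
  unfold gaussDensity
  fun_prop

theorem continuousAt_gaussDensity {A : Matrix (Fin m) (Fin m) ℝ} (hA : 0 < A.det)
    (η : Fin m → ℝ) : ContinuousAt (fun M => gaussDensity M η) A := by
  have hinv : ContinuousAt Inv.inv A :=
    continuousAt_matrix_inv A (by simpa [Ring.inverse_eq_inv'] using continuousAt_inv₀ hA.ne')
  have hsqrt : √((2 * Real.pi) ^ m * A.det) ≠ 0 := by positivity
  unfold gaussDensity
  exact (((by fun_prop : Continuous fun M : Matrix (Fin m) (Fin m) ℝ =>
      √((2 * Real.pi) ^ m * M.det)).continuousAt).inv₀ hsqrt).mul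
    (((continuous_const.dotProduct (continuous_id.matrix_mulVec continuous_const)).continuousAt.comp
      hinv).neg.div_const 2).rexp

theorem gaussDensity_smul_smul {B : Matrix (Fin m) (Fin m) ℝ} (hB : IsUnit B.det) {t : ℝ}
    (ht : 0 < t) (ζ : Fin m → ℝ) :
    gaussDensity (t • B) (√t • ζ) = (√t ^ m)⁻¹ * gaussDensity B ζ := by
  have hinv : (t • B)⁻¹ = t⁻¹ • B⁻¹ := Matrix.inv_smul' B (Units.mk0 t ht.ne') hB
  have hquad : √t • ζ ⬝ᵥ (t • B)⁻¹ *ᵥ (√t • ζ) = ζ ⬝ᵥ B⁻¹ *ᵥ ζ := by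
    rw [hinv, smul_mulVec, mulVec_smul, smul_dotProduct, dotProduct_smul, dotProduct_smul,
      smul_smul, smul_smul, mul_right_comm, Real.mul_self_sqrt ht.le, mul_inv_cancel₀ ht.ne',
      one_smul]
  have hdet : (2 * Real.pi) ^ m * (t • B).det = (√t ^ m) ^ 2 * ((2 * Real.pi) ^ m * B.det) := by
    rw [det_smul, Fintype.card_fin, ← pow_mul, mul_comm m, pow_mul, Real.sq_sqrt ht.le]
    ring
  unfold gaussDensity
  rw [hquad, hdet, Real.sqrt_mul (sq_nonneg _), Real.sqrt_sq (by positivity), mul_inv, mul_assoc]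

theorem lintegral_ofReal_mul_gaussDensity_smul (G : (Fin m → ℝ) → ℝ)
    {B : Matrix (Fin m) (Fin m) ℝ} (hB : IsUnit B.det) {t : ℝ} (ht : 0 < t) :
    ∫⁻ η, ENNReal.ofReal (G η * gaussDensity (t • B) η) =
      ∫⁻ ζ, ENNReal.ofReal (G (√t • ζ) * gaussDensity B ζ) := by
  have hc : 0 < √t ^ m := by positivity
  have hscale : ∀ ζ, ENNReal.ofReal (G (√t • ζ) * gaussDensity B ζ) =
      ENNReal.ofReal (√t ^ m) * ENNReal.ofReal (G (√t • ζ) * gaussDensity (t • B) (√t • ζ)) := by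
    intro ζ
    rw [← ENNReal.ofReal_mul hc.le, gaussDensity_smul_smul hB ht, mul_left_comm,
      mul_inv_cancel_left₀ hc.ne']
  simp_rw [hscale]
  rw [lintegral_const_mul' _ _ ENNReal.ofReal_ne_top, Measure.lintegral_comp_smul volume
      (fun η => ENNReal.ofReal (G η * gaussDensity (t • B) η)) (Real.sqrt_pos.2 ht).ne',
    Module.finrank_fin_fun, abs_of_pos (inv_pos.2 hc), ← mul_assoc, ← ENNReal.ofReal_mul hc.le,
    mul_inv_cancel₀ hc.ne', ENNReal.ofReal_one, one_mul]

theorem gaussDensity_smul_one (v : ℝ≥0) (ζ : Fin m → ℝ) :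
    gaussDensity ((v : ℝ) • (1 : Matrix (Fin m) (Fin m) ℝ)) ζ = ∏ j, gaussianPDFReal 0 v (ζ j) := by
  have hinv : ((v : ℝ) • (1 : Matrix (Fin m) (Fin m) ℝ))⁻¹ = (v : ℝ)⁻¹ • 1 := by
    by_cases hv : (v : ℝ) = 0
    · simp [hv]
    · exact inv_eq_left_inv (by rw [smul_mul_smul_comm, inv_mul_cancel₀ hv, one_mul, one_smul])
  have hquad : -(ζ ⬝ᵥ ((v : ℝ)⁻¹ • 1 : Matrix (Fin m) (Fin m) ℝ) *ᵥ ζ) / 2 =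
      ∑ j, -(ζ j - 0) ^ 2 / (2 * v) := by
    simp only [smul_mulVec, one_mulVec, dotProduct, Pi.smul_apply, smul_eq_mul, neg_div,
      Finset.sum_div, ← Finset.sum_neg_distrib]
    exact Finset.sum_congr rfl fun j _ => by ring
  have hdet : (2 * Real.pi) ^ m * ((v : ℝ) • (1 : Matrix (Fin m) (Fin m) ℝ)).det =
      (2 * Real.pi * v) ^ m := by
    rw [det_smul, det_one, Fintype.card_fin, mul_one]
    ring
  unfold gaussDensity gaussianPDFReal
  rw [hinv, hquad, hdet, Real.sqrt_pow (by positivity), Finset.prod_mul_distrib, Finset.prod_const,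
    Finset.card_univ, Fintype.card_fin, inv_pow, ← Real.exp_sum]

end GaussDensity

section HalfLine

variable {v : ℝ≥0}

theorem gaussianPDFReal_zero_neg (v : ℝ≥0) (t : ℝ) :
    gaussianPDFReal 0 v (-t) = gaussianPDFReal 0 v t := by
  simp [gaussianPDFReal]

theorem setIntegral_Iio_gaussianPDFReal_zero_eq_Ici (v : ℝ≥0) :
    ∫ t in Set.Iio 0, gaussianPDFReal 0 v t = ∫ t in Set.Ici 0, gaussianPDFReal 0 v t := by
  simpa [gaussianPDFReal_zero_neg, integral_Iic_eq_integral_Iio, integral_Ici_eq_integral_Ioi] using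
    (integral_comp_neg_Ioi 0 (gaussianPDFReal 0 v)).symm

theorem setIntegral_Ici_gaussianPDFReal_zero (hv : v ≠ 0) :
    ∫ t in Set.Ici 0, gaussianPDFReal 0 v t = 1 / 2 := by
  have hsplit := intervalIntegral.integral_Iio_add_Ici (b := 0)
    (integrable_gaussianPDFReal 0 v).integrableOn (integrable_gaussianPDFReal 0 v).integrableOn
  rw [setIntegral_Iio_gaussianPDFReal_zero_eq_Ici, integral_gaussianPDFReal_eq_one 0 hv] at hsplit
  linarith

theorem ite_mul_eq_piecewise (a b : ℝ) (f : ℝ → ℝ) :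
    (fun t => (if t < 0 then a else b) * f t) = (Set.Iio 0).piecewise (a * f ·) (b * f ·) := by
  ext t
  simp only [Set.piecewise, Set.mem_Iio, ite_mul]

theorem integrable_ite_mul_gaussianPDFReal (a b : ℝ) (v : ℝ≥0) :
    Integrable fun t => (if t < 0 then a else b) * gaussianPDFReal 0 v t := by
  rw [ite_mul_eq_piecewise]
  exact .piecewise measurableSet_Iio ((integrable_gaussianPDFReal 0 v).const_mul a).integrableOn
    ((integrable_gaussianPDFReal 0 v).const_mul b).integrableOn

theorem integral_ite_mul_gaussianPDFReal (a b : ℝ) (hv : v ≠ 0) :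
    ∫ t, (if t < 0 then a else b) * gaussianPDFReal 0 v t = (a + b) / 2 := by
  rw [ite_mul_eq_piecewise, integral_piecewise measurableSet_Iio
    ((integrable_gaussianPDFReal 0 v).const_mul a).integrableOn
    ((integrable_gaussianPDFReal 0 v).const_mul b).integrableOn, Set.compl_Iio,
    integral_const_mul, integral_const_mul, setIntegral_Iio_gaussianPDFReal_zero_eq_Ici,
    setIntegral_Ici_gaussianPDFReal_zero hv]
  ring

theorem lintegral_prod_ite_mul_gaussianPDFReal {ι : Type*} [Fintype ι] {a b : ι → ℝ}
    (ha : 0 ≤ a) (hb : 0 ≤ b) (hv : v ≠ 0) :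
    ∫⁻ ζ : ι → ℝ, ENNReal.ofReal (∏ j, (if ζ j < 0 then a j else b j) * gaussianPDFReal 0 v (ζ j)) =
      ENNReal.ofReal (∏ j, (a j + b j) / 2) := by
  have hnonneg : ∀ j t, 0 ≤ (if t < 0 then a j else b j) * gaussianPDFReal 0 v t := fun j t =>
    mul_nonneg (by split_ifs; exacts [ha j, hb j]) (gaussianPDFReal_nonneg 0 v t)
  rw [volume_pi, ← ofReal_integral_eq_lintegral_ofReal
      (Integrable.fintype_prod fun j => integrable_ite_mul_gaussianPDFReal (a j) (b j) v)
      (.of_forall fun ζ => Finset.prod_nonneg fun j _ => hnonneg j (ζ j)),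
    integral_fintype_prod_eq_prod fun j t => (if t < 0 then a j else b j) * gaussianPDFReal 0 v t]
  simp_rw [integral_ite_mul_gaussianPDFReal _ _ hv]

end HalfLine

theorem tendsto_comp_mul_of_tendsto_atBot_of_tendsto_atTop {X ι : Type*} [TopologicalSpace X]
    {g : ℝ → X} {a b : X} (ha : Tendsto g atBot (𝓝 a)) (hb : Tendsto g atTop (𝓝 b))
    {l : Filter ι} {c : ι → ℝ} (hc : Tendsto c l atTop) {x : ℝ} (hx : x ≠ 0) :
    Tendsto (fun i => g (c i * x)) l (𝓝 (if x < 0 then a else b)) := by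
  rcases hx.lt_or_gt with hx | hx
  · rw [if_pos hx]
    exact ha.comp (hc.atTop_mul_const_of_neg hx)
  · rw [if_neg hx.not_gt]
    exact hb.comp (hc.atTop_mul_const hx)

theorem ae_forall_apply_ne (ι : Type*) [Fintype ι] (x : ℝ) : ∀ᵐ ζ : ι → ℝ, ∀ j, ζ j ≠ x :=
  ae_all_iff.2 fun j => by
    rw [volume_pi]
    exact Measure.ae_eval_ne (fun _ : ι => (volume : Measure ℝ)) j x

theorem lintegral_le_liminf_lintegral_of_ae_tendsto {α ι : Type*} [MeasurableSpace α]
    {μ : Measure α} {u : Filter ι} [u.NeBot] [u.IsCountablyGenerated] {f : ι → α → ℝ≥0∞}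
    {F : α → ℝ≥0∞} (hf : ∀ i, AEMeasurable (f i) μ)
    (hlim : ∀ᵐ x ∂μ, Tendsto (fun i => f i x) u (𝓝 (F x))) :
    ∫⁻ x, F x ∂μ ≤ liminf (fun i => ∫⁻ x, f i x ∂μ) u :=
  (lintegral_congr_ae (hlim.mono fun _ hx => hx.liminf_eq.symm)).trans_le (lintegral_liminf_le' hf)

theorem marginal_likelihood_liminf_bound_general
    (n : ℕ) (τ : ℝ) (hτ : 0 < τ)
    (g : Fin n → ℝ → ℝ)
    (hgm : ∀ j, Measurable (g j))
    (a b : Fin n → ℝ) (ha0 : ∀ j, 0 ≤ a j) (hb0 : ∀ j, 0 ≤ b j)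
    (ha : ∀ j, Tendsto (g j) atBot (𝓝 (a j)))
    (hb : ∀ j, Tendsto (g j) atTop (𝓝 (b j)))
    (s : ℕ → ℝ) (hs : ∀ p, 0 < s p) (hsdiv : Tendsto s atTop atTop)
    (B : ℕ → Matrix (Fin n) (Fin n) ℝ) (hB : ∀ p, (B p).PosDef)
    (hBc : ∀ x y, Tendsto (fun p => B p x y) atTop
      (𝓝 ((τ ^ 2 • (1 : Matrix (Fin n) (Fin n) ℝ)) x y))) :
    ENNReal.ofReal (∏ j, (a j + b j) / 2) ≤
      Filter.liminf (fun p => ∫⁻ η : Fin n → ℝ,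
        ENNReal.ofReal ((∏ j, g j (η j)) * gaussDensity (s p • B p) η)) atTop := by
  set v : ℝ≥0 := ⟨τ ^ 2, sq_nonneg τ⟩
  have hv : v ≠ 0 := NNReal.coe_ne_zero.1 (pow_ne_zero 2 hτ.ne')
  have hBlim : Tendsto B atTop (𝓝 ((v : ℝ) • 1)) :=
    tendsto_pi_nhds.2 fun x => tendsto_pi_nhds.2 (hBc x)
  have hdet : 0 < ((v : ℝ) • (1 : Matrix (Fin n) (Fin n) ℝ)).det := by
    rw [det_smul, det_one, mul_one]
    exact pow_pos (pow_pos hτ 2) _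
  have hrescale : ∀ p, ∫⁻ η, ENNReal.ofReal ((∏ j, g j (η j)) * gaussDensity (s p • B p) η) =
      ∫⁻ ζ, ENNReal.ofReal ((∏ j, g j (√(s p) * ζ j)) * gaussDensity (B p) ζ) := fun p =>
    lintegral_ofReal_mul_gaussDensity_smul (fun η => ∏ j, g j (η j))
      (hB p).det_pos.ne'.isUnit (hs p)
  have hlim : ∀ᵐ ζ : Fin n → ℝ, Tendsto
      (fun p => ENNReal.ofReal ((∏ j, g j (√(s p) * ζ j)) * gaussDensity (B p) ζ)) atTop
      (𝓝 (ENNReal.ofReal (∏ j, (if ζ j < 0 then a j else b j) * gaussianPDFReal 0 v (ζ j)))) := by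
    filter_upwards [ae_forall_apply_ne (Fin n) 0] with ζ hζ
    rw [Finset.prod_mul_distrib, ← gaussDensity_smul_one]
    exact ENNReal.tendsto_ofReal ((tendsto_finsetProd _ fun j _ =>
      tendsto_comp_mul_of_tendsto_atBot_of_tendsto_atTop (ha j) (hb j)
        (Real.tendsto_sqrt_atTop.comp hsdiv) (hζ j)).mul
      ((continuousAt_gaussDensity hdet ζ).tendsto.comp hBlim))
  calc ENNReal.ofReal (∏ j, (a j + b j) / 2)
      = ∫⁻ ζ : Fin n → ℝ, ENNReal.ofReal
          (∏ j, (if ζ j < 0 then a j else b j) * gaussianPDFReal 0 v (ζ j)) :=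
        (lintegral_prod_ite_mul_gaussianPDFReal ha0 hb0 hv).symm
    _ ≤ _ := lintegral_le_liminf_lintegral_of_ae_tendsto
        (fun p => Measurable.aemeasurable (by fun_prop)) hlim
    _ = _ := by simp_rw [hrescale]

/-- **Fatou lower bound of Theorem 5(b).** If each `gⱼ` is bounded with limits `aⱼ`
at `−∞` and `bⱼ` at `+∞`, `sₚ → ∞` and `Bₚ → τ²Iₙ` entrywise, then
`liminf_p ∫ ∏ⱼ gⱼ(ηⱼ) φ_{sₚBₚ}(η) dη ≥ ∏ⱼ (aⱼ + bⱼ)/2`. -/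
theorem marginal_likelihood_liminf_bound
    (n : ℕ) (hn : 1 ≤ n) (τ : ℝ) (hτ : 0 < τ)
    (g : Fin n → ℝ → ℝ)
    (hgm : ∀ j, Measurable (g j)) (hg0 : ∀ j t, 0 ≤ g j t)
    (hgb : ∀ j, ∃ B, ∀ t, g j t ≤ B)
    (a b : Fin n → ℝ) (ha0 : ∀ j, 0 ≤ a j) (hb0 : ∀ j, 0 ≤ b j)
    (ha : ∀ j, Tendsto (g j) atBot (𝓝 (a j)))
    (hb : ∀ j, Tendsto (g j) atTop (𝓝 (b j)))
    (s : ℕ → ℝ) (hs : ∀ p, 0 < s p) (hsdiv : Tendsto s atTop atTop)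
    (B : ℕ → Matrix (Fin n) (Fin n) ℝ) (hB : ∀ p, (B p).PosDef)
    (hBc : ∀ x y, Tendsto (fun p => B p x y) atTop
      (𝓝 ((τ ^ 2 • (1 : Matrix (Fin n) (Fin n) ℝ)) x y))) :
    ENNReal.ofReal (∏ j, (a j + b j) / 2) ≤
      Filter.liminf (fun p => ∫⁻ η : Fin n → ℝ,
        ENNReal.ofReal ((∏ j, g j (η j)) * gaussDensity (s p • B p) η)) atTop :=
  marginal_likelihood_liminf_bound_general n τ hτ g hgm a b ha0 hb0 ha hb s hs hsdiv B hB hBc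
end
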